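/- arXiv:0711.1933 — 2 statements merged into one kernel-verified Lean document; each statement's English description precedes it below -/
import Mathlib

section
/- Let 1 < q < ∞ and 0 < s < 1, and let w be a non-negative measurable function on (0,∞). Define J₁(r) = (1/r) ∫_0^{r/2} w(λ) (∫_{r−λ}^{r+λ} ρ^{−1+s} h(ρ,λ;r)^{−1/2} dρ) dλ and J₃(r) = (1/r) ∫_{2r}^{∞} w(λ) (∫_{λ−r}^{λ+r} ρ^{−1+s} h(ρ,λ;r)^{−1/2} dρ) dλ. Then there is a constant C such that for i = 1 and i = 3, r^{1/q} J_i(r) ≤ C ∫_0^∞ λ^{1/q} w(λ) |r − λ|^{−(1−s)} dλ for all r > 0. -/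
open MeasureTheory Set
open scoped ENNReal NNReal

/-- `h(ρ,λ;r) = 1 - ((r² + λ² - ρ²)/(2λr))²`. -/
noncomputable def hKernel (ρ lam r : ℝ) : ℝ :=
  1 - ((r ^ 2 + lam ^ 2 - ρ ^ 2) / (2 * lam * r)) ^ 2

/-- `J₁(r) = (1/r) ∫₀^{r/2} w(λ) ∫_{r-λ}^{r+λ} ρ^{-1+s} h(ρ,λ;r)^{-1/2} dρ dλ`. -/
noncomputable def J₁ (s : ℝ) (w : ℝ → ℝ) (r : ℝ) : ℝ≥0∞ :=
  ENNReal.ofReal (1 / r) *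
    ∫⁻ lam in Ioo (0 : ℝ) (r / 2), ENNReal.ofReal (w lam) *
      ∫⁻ ρ in Ioo (r - lam) (r + lam),
        ENNReal.ofReal (ρ ^ (-1 + s) * hKernel ρ lam r ^ (-(1 / 2) : ℝ))

/-- `J₃(r) = (1/r) ∫_{2r}^∞ w(λ) ∫_{λ-r}^{λ+r} ρ^{-1+s} h(ρ,λ;r)^{-1/2} dρ dλ`. -/
noncomputable def J₃ (s : ℝ) (w : ℝ → ℝ) (r : ℝ) : ℝ≥0∞ :=
  ENNReal.ofReal (1 / r) *
    ∫⁻ lam in Ioi (2 * r), ENNReal.ofReal (w lam) *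
      ∫⁻ ρ in Ioo (lam - r) (lam + r),
        ENNReal.ofReal (ρ ^ (-1 + s) * hKernel ρ lam r ^ (-(1 / 2) : ℝ))

/-!
On `|r - λ| < ρ < r + λ` the kernel factors as
`h(ρ,λ;r) = (ρ - a)(b - ρ)(ρ + a)(b + ρ) / (2λr)²` with `a = |r - λ|`, `b = r + λ`, and the last
two factors are at least `2a` each. Together with `ρ^(s-1) ≤ a^(s-1)` this bounds the inner
integral by `λ r a^(s-2) ∫ₐᵇ ((ρ - a)(b - ρ))^(-1/2) dρ ≤ 4 λ r a^(s-2)`. What remains is the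
weight comparison `r^(1/q) λ ≤ 2 λ^(1/q) |r - λ|`, which holds on `λ < r/2` and on `λ > 2r`.
-/

lemma lintegral_Ioo_ofReal_eq_intervalIntegral {f : ℝ → ℝ} {a b : ℝ} (hab : a ≤ b)
    (hf : IntervalIntegrable f volume a b) (hf0 : ∀ x ∈ Ioo a b, 0 ≤ f x) :
    ∫⁻ x in Ioo a b, ENNReal.ofReal (f x) = ENNReal.ofReal (∫ x in a..b, f x) := by
  rw [intervalIntegral.integral_of_le hab, integral_Ioc_eq_integral_Ioo,
    ofReal_integral_eq_lintegral_ofReal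
      ((intervalIntegrable_iff_integrableOn_Ioo_of_le hab).mp hf)
      ((ae_restrict_iff' measurableSet_Ioo).mpr (ae_of_all _ hf0))]

lemma lintegral_Ioo_rpow_sub_left {p a b : ℝ} (hp : -1 < p) (hab : a ≤ b) :
    ∫⁻ x in Ioo a b, ENNReal.ofReal ((x - a) ^ p) =
      ENNReal.ofReal ((b - a) ^ (p + 1) / (p + 1)) := by
  rw [lintegral_Ioo_ofReal_eq_intervalIntegral (f := fun x => (x - a) ^ p) hab
      (by simpa using
        (intervalIntegral.intervalIntegrable_rpow' (a := 0) (b := b - a) hp).comp_sub_right a)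
      fun x hx => Real.rpow_nonneg (sub_nonneg.mpr hx.1.le) p,
    intervalIntegral.integral_comp_sub_right (fun x => x ^ p), integral_rpow (Or.inl hp),
    sub_self, Real.zero_rpow (by linarith), sub_zero]

lemma lintegral_Ioo_rpow_sub_right {p a b : ℝ} (hp : -1 < p) (hab : a ≤ b) :
    ∫⁻ x in Ioo a b, ENNReal.ofReal ((b - x) ^ p) =
      ENNReal.ofReal ((b - a) ^ (p + 1) / (p + 1)) := by
  rw [lintegral_Ioo_ofReal_eq_intervalIntegral (f := fun x => (b - x) ^ p) hab
      (by simpa using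
        (intervalIntegral.intervalIntegrable_rpow' (a := b - a) (b := 0) hp).comp_sub_left b)
      fun x hx => Real.rpow_nonneg (sub_nonneg.mpr hx.2.le) p,
    intervalIntegral.integral_comp_sub_left (fun x => x ^ p), integral_rpow (Or.inl hp),
    sub_self, Real.zero_rpow (by linarith), sub_zero]

/-- `√(u⁻¹ + v⁻¹) ≤ √u⁻¹ + √v⁻¹`, where `u⁻¹ + v⁻¹ = (u + v) / (u v)`. -/
lemma rpow_neg_half_mul_le {u v : ℝ} (hu : 0 < u) (hv : 0 < v) :
    (u * v) ^ (-(1 / 2) : ℝ) ≤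
      (u + v) ^ (-(1 / 2) : ℝ) * (u ^ (-(1 / 2) : ℝ) + v ^ (-(1 / 2) : ℝ)) := by
  have huv : (u * v) ^ (-(1 / 2) : ℝ) =
      (u + v) ^ (-(1 / 2) : ℝ) * (u⁻¹ + v⁻¹) ^ (1 / 2 : ℝ) := by
    have : u⁻¹ + v⁻¹ = (u + v) * (u * v)⁻¹ := by field_simp; ring
    rw [this, Real.mul_rpow (x := u + v) (by positivity) (by positivity), ← mul_assoc,
      ← Real.rpow_add (by positivity), Real.inv_rpow (by positivity), ← Real.rpow_neg
      (by positivity)]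
    norm_num
  rw [huv, Real.rpow_neg hu.le, Real.rpow_neg hv.le, ← Real.inv_rpow hu.le,
    ← Real.inv_rpow hv.le]
  gcongr
  exact Real.rpow_add_le_add_rpow (by positivity) (by positivity) (by norm_num) (by norm_num)

lemma lintegral_Ioo_rpow_neg_half_mul_le {a b : ℝ} (hab : a < b) :
    ∫⁻ x in Ioo a b, ENNReal.ofReal (((x - a) * (b - x)) ^ (-(1 / 2) : ℝ)) ≤ 4 := by
  have hba : 0 < b - a := sub_pos.mpr hab
  set c := (b - a) ^ (-(1 / 2) : ℝ) with hc_def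
  have hbound : ∀ x ∈ Ioo a b, ENNReal.ofReal (((x - a) * (b - x)) ^ (-(1 / 2) : ℝ)) ≤
      ENNReal.ofReal c * (ENNReal.ofReal ((x - a) ^ (-(1 / 2) : ℝ)) +
        ENNReal.ofReal ((b - x) ^ (-(1 / 2) : ℝ))) := by
    intro x ⟨hax, hxb⟩
    rw [← ENNReal.ofReal_add (by positivity) (by positivity),
      ← ENNReal.ofReal_mul (by positivity)]
    refine ENNReal.ofReal_le_ofReal ?_
    convert rpow_neg_half_mul_le (sub_pos.mpr hax) (sub_pos.mpr hxb) using 3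
    ring
  have hc : c * ((b - a) ^ (1 / 2 : ℝ) / (1 / 2)) = 2 := by
    rw [hc_def, Real.rpow_neg hba.le, mul_div_assoc', inv_mul_cancel₀ (by positivity)]
    norm_num
  calc ∫⁻ x in Ioo a b, ENNReal.ofReal (((x - a) * (b - x)) ^ (-(1 / 2) : ℝ))
      ≤ ∫⁻ x in Ioo a b, ENNReal.ofReal c * (ENNReal.ofReal ((x - a) ^ (-(1 / 2) : ℝ)) +
          ENNReal.ofReal ((b - x) ^ (-(1 / 2) : ℝ))) :=
        setLIntegral_mono' measurableSet_Ioo hbound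
    _ = ENNReal.ofReal (c * ((b - a) ^ (1 / 2 : ℝ) / (1 / 2))) +
          ENNReal.ofReal (c * ((b - a) ^ (1 / 2 : ℝ) / (1 / 2))) := by
      rw [lintegral_const_mul' _ _ ENNReal.ofReal_ne_top, lintegral_add_left (by fun_prop),
        lintegral_Ioo_rpow_sub_left (by norm_num) hab.le,
        lintegral_Ioo_rpow_sub_right (by norm_num) hab.le, mul_add,
        ← ENNReal.ofReal_mul (by positivity)]
      norm_num
    _ = 4 := by
      rw [hc, ← ENNReal.ofReal_add (by norm_num) (by norm_num)]
      norm_num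

lemma hKernel_eq {ρ lam r : ℝ} (hlam : 0 < lam) (hr : 0 < r) :
    hKernel ρ lam r = (ρ - |r - lam|) * (r + lam - ρ) * ((ρ + |r - lam|) * (r + lam + ρ)) /
      (2 * lam * r) ^ 2 := by
  have ha : |r - lam| ^ 2 = (r - lam) ^ 2 := sq_abs _
  unfold hKernel
  field_simp
  linear_combination ((r + lam) ^ 2 - ρ ^ 2) * ha

lemma sq_div_mul_le_hKernel {ρ lam r : ℝ} (hlam : 0 < lam) (hr : 0 < r)
    (hρa : |r - lam| ≤ ρ) (hρb : ρ ≤ r + lam) :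
    (|r - lam| / (lam * r)) ^ 2 * ((ρ - |r - lam|) * (r + lam - ρ)) ≤ hKernel ρ lam r := by
  rw [hKernel_eq hlam hr, le_div_iff₀ (by positivity)]
  have hX : 0 ≤ (ρ - |r - lam|) * (r + lam - ρ) := by nlinarith
  have hY : 4 * |r - lam| ^ 2 ≤ (ρ + |r - lam|) * (r + lam + ρ) := by
    nlinarith [abs_nonneg (r - lam)]
  calc (|r - lam| / (lam * r)) ^ 2 * ((ρ - |r - lam|) * (r + lam - ρ)) * (2 * lam * r) ^ 2
      = 4 * |r - lam| ^ 2 * ((ρ - |r - lam|) * (r + lam - ρ)) := by field_simp; ring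
    _ ≤ _ := by nlinarith

lemma hKernel_rpow_neg_half_le {ρ lam r : ℝ} (hlam : 0 < lam) (hr : 0 < r) (hne : lam ≠ r)
    (hρa : |r - lam| < ρ) (hρb : ρ < r + lam) :
    hKernel ρ lam r ^ (-(1 / 2) : ℝ) ≤
      lam * r / |r - lam| * ((ρ - |r - lam|) * (r + lam - ρ)) ^ (-(1 / 2) : ℝ) := by
  have ha : 0 < |r - lam| := abs_pos.mpr (sub_ne_zero.mpr hne.symm)
  have hX : 0 < (ρ - |r - lam|) * (r + lam - ρ) := by nlinarith
  have hsq : ((|r - lam| / (lam * r)) ^ 2) ^ (-(1 / 2) : ℝ) = lam * r / |r - lam| := by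
    rw [Real.rpow_neg (by positivity), ← Real.sqrt_eq_rpow, Real.sqrt_sq (by positivity),
      inv_div]
  calc hKernel ρ lam r ^ (-(1 / 2) : ℝ)
      ≤ ((|r - lam| / (lam * r)) ^ 2 * ((ρ - |r - lam|) * (r + lam - ρ))) ^ (-(1 / 2) : ℝ) :=
        Real.rpow_le_rpow_of_nonpos (by positivity)
          (sq_div_mul_le_hKernel hlam hr hρa.le hρb.le) (by norm_num)
    _ = _ := by rw [Real.mul_rpow (by positivity) hX.le, hsq]

noncomputable def kernelIntegral (s lam r : ℝ) : ℝ≥0∞ :=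
  ∫⁻ ρ in Ioo |r - lam| (r + lam),
    ENNReal.ofReal (ρ ^ (-1 + s) * hKernel ρ lam r ^ (-(1 / 2) : ℝ))

lemma kernelIntegral_le {s lam r : ℝ} (hs1 : s < 1) (hlam : 0 < lam) (hr : 0 < r)
    (hne : lam ≠ r) :
    kernelIntegral s lam r ≤
      ENNReal.ofReal (4 * (lam * r / (|r - lam| * |r - lam| ^ (1 - s)))) := by
  set a := |r - lam|
  have ha : 0 < a := abs_pos.mpr (sub_ne_zero.mpr hne.symm)
  set K := lam * r / (a * a ^ (1 - s))
  have hab : a < r + lam := abs_sub_lt_iff.mpr ⟨by linarith, by linarith⟩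
  have hbound : ∀ ρ ∈ Ioo a (r + lam), ρ ^ (-1 + s) * hKernel ρ lam r ^ (-(1 / 2) : ℝ) ≤
      K * ((ρ - a) * (r + lam - ρ)) ^ (-(1 / 2) : ℝ) := by
    intro ρ ⟨hρa, hρb⟩
    have hX : 0 < (ρ - a) * (r + lam - ρ) := mul_pos (by linarith) (by linarith)
    have hρ : ρ ^ (-1 + s) ≤ (a ^ (1 - s))⁻¹ := by
      rw [← Real.rpow_neg ha.le, neg_sub, sub_eq_neg_add]
      exact Real.rpow_le_rpow_of_nonpos ha hρa.le (by linarith)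
    calc ρ ^ (-1 + s) * hKernel ρ lam r ^ (-(1 / 2) : ℝ)
        ≤ ρ ^ (-1 + s) * (lam * r / a * ((ρ - a) * (r + lam - ρ)) ^ (-(1 / 2) : ℝ)) :=
          mul_le_mul_of_nonneg_left (hKernel_rpow_neg_half_le hlam hr hne hρa hρb)
            (Real.rpow_nonneg (ha.trans hρa).le _)
      _ ≤ (a ^ (1 - s))⁻¹ * (lam * r / a * ((ρ - a) * (r + lam - ρ)) ^ (-(1 / 2) : ℝ)) :=
          mul_le_mul_of_nonneg_right hρ
            (mul_nonneg (by positivity) (Real.rpow_nonneg hX.le _))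
      _ = K * ((ρ - a) * (r + lam - ρ)) ^ (-(1 / 2) : ℝ) := by ring
  calc kernelIntegral s lam r
      ≤ ∫⁻ ρ in Ioo a (r + lam), ENNReal.ofReal K *
          ENNReal.ofReal (((ρ - a) * (r + lam - ρ)) ^ (-(1 / 2) : ℝ)) :=
        setLIntegral_mono' measurableSet_Ioo fun ρ hρ => by
          rw [← ENNReal.ofReal_mul (by positivity)]
          exact ENNReal.ofReal_le_ofReal (hbound ρ hρ)
    _ ≤ ENNReal.ofReal K * 4 := by
        rw [lintegral_const_mul' _ _ ENNReal.ofReal_ne_top]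
        gcongr
        exact lintegral_Ioo_rpow_neg_half_mul_le hab
    _ = ENNReal.ofReal (4 * K) := by
        rw [mul_comm, ENNReal.ofReal_mul (by norm_num), ENNReal.ofReal_ofNat]

lemma ofReal_mul_kernelIntegral_le {q s lam r W : ℝ} (hs1 : s < 1) (hlam : 0 < lam)
    (hr : 0 < r) (hW : 0 ≤ W) (hcmp : r ^ (1 / q) * lam ≤ 2 * lam ^ (1 / q) * |r - lam|) :
    ENNReal.ofReal (r ^ (1 / q)) *
        (ENNReal.ofReal (1 / r) * (ENNReal.ofReal W * kernelIntegral s lam r)) ≤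
      8 * ENNReal.ofReal (lam ^ (1 / q) * W / |r - lam| ^ (1 - s)) := by
  have hne : lam ≠ r := by
    rintro rfl
    simp only [sub_self, abs_zero, mul_zero] at hcmp
    exact (mul_pos (Real.rpow_pos_of_pos hlam _) hlam).not_ge hcmp
  set a := |r - lam|
  have ha : 0 < a := abs_pos.mpr (sub_ne_zero.mpr hne.symm)
  have hreal : r ^ (1 / q) * (1 / r * (W * (4 * (lam * r / (a * a ^ (1 - s)))))) ≤
      8 * (lam ^ (1 / q) * W / a ^ (1 - s)) := by
    calc r ^ (1 / q) * (1 / r * (W * (4 * (lam * r / (a * a ^ (1 - s))))))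
        = 4 * W / (a * a ^ (1 - s)) * (r ^ (1 / q) * lam) := by field_simp
      _ ≤ 4 * W / (a * a ^ (1 - s)) * (2 * lam ^ (1 / q) * a) :=
          mul_le_mul_of_nonneg_left hcmp (by positivity)
      _ = 8 * (lam ^ (1 / q) * W / a ^ (1 - s)) := by field_simp; ring
  calc ENNReal.ofReal (r ^ (1 / q)) *
        (ENNReal.ofReal (1 / r) * (ENNReal.ofReal W * kernelIntegral s lam r))
      ≤ ENNReal.ofReal (r ^ (1 / q)) * (ENNReal.ofReal (1 / r) *
          (ENNReal.ofReal W * ENNReal.ofReal (4 * (lam * r / (a * a ^ (1 - s)))))) := by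
        gcongr
        exact kernelIntegral_le hs1 hlam hr hne
    _ ≤ ENNReal.ofReal (8 * (lam ^ (1 / q) * W / a ^ (1 - s))) := by
        rw [← ENNReal.ofReal_mul hW, ← ENNReal.ofReal_mul (by positivity),
          ← ENNReal.ofReal_mul (by positivity)]
        exact ENNReal.ofReal_le_ofReal hreal
    _ = 8 * ENNReal.ofReal (lam ^ (1 / q) * W / a ^ (1 - s)) := by
        rw [ENNReal.ofReal_mul (by norm_num), ENNReal.ofReal_ofNat]

lemma rpow_mul_le_two_mul_rpow_mul_abs_sub_of_lt_half {θ lam r : ℝ} (hθ : θ ≤ 1)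
    (hlam : 0 < lam) (h : lam < r / 2) :
    r ^ θ * lam ≤ 2 * lam ^ θ * |r - lam| := by
  have hr : 0 < r := by linarith
  calc r ^ θ * lam = r ^ θ * lam ^ θ * lam ^ (1 - θ) := by
        rw [mul_assoc, ← Real.rpow_add hlam, add_sub_cancel, Real.rpow_one]
    _ ≤ r ^ θ * lam ^ θ * r ^ (1 - θ) := by
        gcongr
        linarith
    _ = lam ^ θ * r := by
        rw [mul_comm (r ^ θ), mul_assoc, ← Real.rpow_add hr, add_sub_cancel, Real.rpow_one]
    _ ≤ 2 * lam ^ θ * |r - lam| := by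
        rw [abs_of_pos (by linarith)]
        nlinarith [Real.rpow_pos_of_pos hlam θ]

lemma rpow_mul_le_two_mul_rpow_mul_abs_sub_of_two_mul_lt {θ lam r : ℝ} (hθ : 0 ≤ θ)
    (hr : 0 < r) (h : 2 * r < lam) :
    r ^ θ * lam ≤ 2 * lam ^ θ * |r - lam| := by
  have hrθ : r ^ θ ≤ lam ^ θ := Real.rpow_le_rpow hr.le (by linarith) hθ
  rw [abs_of_neg (by linarith)]
  nlinarith [Real.rpow_pos_of_pos hr θ]

lemma J₁_eq (s : ℝ) (w : ℝ → ℝ) (r : ℝ) :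
    J₁ s w r = ENNReal.ofReal (1 / r) *
      ∫⁻ lam in Ioo 0 (r / 2), ENNReal.ofReal (w lam) * kernelIntegral s lam r := by
  refine congrArg _ (setLIntegral_congr_fun measurableSet_Ioo fun lam hlam => ?_)
  rw [kernelIntegral, abs_of_pos (by linarith [hlam.1, hlam.2])]

lemma J₃_eq (s : ℝ) (w : ℝ → ℝ) {r : ℝ} (hr : 0 ≤ r) :
    J₃ s w r = ENNReal.ofReal (1 / r) *
      ∫⁻ lam in Ioi (2 * r), ENNReal.ofReal (w lam) * kernelIntegral s lam r := by
  refine congrArg _ (setLIntegral_congr_fun measurableSet_Ioi fun lam hlam => ?_)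
  rw [kernelIntegral, abs_of_neg (by linarith [mem_Ioi.mp hlam]), neg_sub, add_comm r lam]

lemma rpow_mul_lintegral_kernelIntegral_le {q s r : ℝ} {w : ℝ → ℝ} {S : Set ℝ}
    (hs1 : s < 1) (hr : 0 < r) (hw : ∀ x, 0 ≤ w x) (hS : MeasurableSet S) (hS0 : S ⊆ Ioi 0)
    (hcmp : ∀ lam ∈ S, r ^ (1 / q) * lam ≤ 2 * lam ^ (1 / q) * |r - lam|) :
    ENNReal.ofReal (r ^ (1 / q)) * (ENNReal.ofReal (1 / r) *
        ∫⁻ lam in S, ENNReal.ofReal (w lam) * kernelIntegral s lam r) ≤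
      8 * ∫⁻ lam in Ioi 0, ENNReal.ofReal (lam ^ (1 / q) * w lam / |r - lam| ^ (1 - s)) := by
  rw [← lintegral_const_mul' _ _ ENNReal.ofReal_ne_top,
    ← lintegral_const_mul' _ _ ENNReal.ofReal_ne_top]
  calc _ ≤ ∫⁻ lam in S, 8 * ENNReal.ofReal (lam ^ (1 / q) * w lam / |r - lam| ^ (1 - s)) :=
        setLIntegral_mono' hS fun lam hlam =>
          ofReal_mul_kernelIntegral_le hs1 (hS0 hlam) hr (hw lam) (hcmp lam hlam)
    _ = 8 * ∫⁻ lam in S, ENNReal.ofReal (lam ^ (1 / q) * w lam / |r - lam| ^ (1 - s)) :=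
        lintegral_const_mul' _ _ ENNReal.ofNat_ne_top
    _ ≤ _ := by gcongr

theorem J1_J3_bound_general (q s : ℝ) (hq : 1 < q) (hs1 : s < 1) :
    ∃ C : ℝ≥0, ∀ w : ℝ → ℝ, (∀ r, 0 ≤ w r) → Measurable w →
      ∀ r : ℝ, 0 < r →
        (ENNReal.ofReal (r ^ (1 / q)) * J₁ s w r
          ≤ C * ∫⁻ lam in Ioi (0 : ℝ),
              ENNReal.ofReal (lam ^ (1 / q) * w lam / |r - lam| ^ (1 - s))) ∧
        (ENNReal.ofReal (r ^ (1 / q)) * J₃ s w r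
          ≤ C * ∫⁻ lam in Ioi (0 : ℝ),
              ENNReal.ofReal (lam ^ (1 / q) * w lam / |r - lam| ^ (1 - s))) := by
  have hq0 : 0 ≤ 1 / q := by positivity
  have hq1 : 1 / q ≤ 1 := (div_le_one (by linarith)).mpr hq.le
  refine ⟨8, fun w hw _ r hr => ⟨?_, ?_⟩⟩
  · rw [ENNReal.coe_ofNat, J₁_eq]
    exact rpow_mul_lintegral_kernelIntegral_le hs1 hr hw measurableSet_Ioo Ioo_subset_Ioi_self
      fun lam hlam => rpow_mul_le_two_mul_rpow_mul_abs_sub_of_lt_half hq1 hlam.1 hlam.2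
  · rw [ENNReal.coe_ofNat, J₃_eq s w hr.le]
    exact rpow_mul_lintegral_kernelIntegral_le hs1 hr hw measurableSet_Ioi
      (Ioi_subset_Ioi (by positivity))
      fun lam hlam => rpow_mul_le_two_mul_rpow_mul_abs_sub_of_two_mul_lt hq0 hr hlam

/-- **Proposition 2.4.** For `1 < q < ∞` and `0 < s < 1` there is a constant `C` such
that for every non-negative measurable `w` on `(0,∞)` and all `r > 0`,
`r^{1/q} Jᵢ(r) ≤ C ∫₀^∞ λ^{1/q} w(λ) |r-λ|^{-(1-s)} dλ` for `i = 1, 3`. -/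
theorem J1_J3_bound (q s : ℝ) (hq : 1 < q) (hs0 : 0 < s) (hs1 : s < 1) :
    ∃ C : ℝ≥0, ∀ w : ℝ → ℝ, (∀ r, 0 ≤ w r) → Measurable w →
      ∀ r : ℝ, 0 < r →
        (ENNReal.ofReal (r ^ (1 / q)) * J₁ s w r
          ≤ C * ∫⁻ lam in Ioi (0 : ℝ),
              ENNReal.ofReal (lam ^ (1 / q) * w lam / |r - lam| ^ (1 - s))) ∧
        (ENNReal.ofReal (r ^ (1 / q)) * J₃ s w r
          ≤ C * ∫⁻ lam in Ioi (0 : ℝ),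
              ENNReal.ofReal (lam ^ (1 / q) * w lam / |r - lam| ^ (1 - s))) :=
  J1_J3_bound_general q s hq hs1
end

section
/- Let n ≥ 2 and let δ > 0 be the constant from the radial lower-bound lemma. Suppose g ≥ 0 is a smooth radially symmetric function with supp g ⊂ {|x| ≤ 1}, written g(x) = ψ(|x|) with ψ ∈ C₀^∞(ℝ) even, such that the function Ψ(ρ) = ∫_ρ^1 λ^{(n−1)/2} ψ(λ) dλ does not vanish identically on (1/(1+δ), 1). Let (1/q, 1/p) ∈ (0, 1/2] × [0, 1/2) satisfy 1/q = (n−1)(1/2 − 1/p), and let u solve □u = 0 with data (0, g) at t = 0. Then lim_{T→+∞} ‖u‖_{L^q((0,T); L^p(ℝ^n))} = +∞. -/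
open MeasureTheory Set Metric intervalIntegral Filter
open scoped ENNReal NNReal FourierTransform Topology

/-- The solution of `□u = 0` with data `(0, g)`:
`u(t,·) = 𝓕⁻¹(sin(t|ξ|)/|ξ| · 𝓕g)`. -/
noncomputable def waveSol (n : ℕ) (g : EuclideanSpace ℝ (Fin n) → ℝ) (t : ℝ)
    (x : EuclideanSpace ℝ (Fin n)) : ℂ :=
  𝓕⁻ (fun ξ => ((Real.sin (t * ‖ξ‖) / ‖ξ‖ : ℝ) : ℂ) * 𝓕 (fun y => (g y : ℂ)) ξ) x

/-- The spatial `L^p` norm with `p = 1/pi` (`pi = 0` corresponds to `p = ∞`). -/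
noncomputable def lpNormInv (n : ℕ) (pi : ℝ) (f : EuclideanSpace ℝ (Fin n) → ℂ) : ℝ≥0∞ :=
  if pi = 0 then essSup (fun x => (‖f x‖₊ : ℝ≥0∞)) volume
  else (∫⁻ x, (‖f x‖₊ : ℝ≥0∞) ^ (1 / pi)) ^ pi

/-- The mixed norm `‖u‖_{L^q((0,T);L^p(ℝⁿ))}` with `q = 1/qi`, `p = 1/pi`. -/
noncomputable def mixedNormOn (n : ℕ) (qi pi T : ℝ)
    (u : ℝ → EuclideanSpace ℝ (Fin n) → ℂ) : ℝ≥0∞ :=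
  (∫⁻ t in Ioo (0 : ℝ) T, (lpNormInv n pi (u t)) ^ (1 / qi)) ^ qi

set_option maxHeartbeats 1000000

/-- **Theorem 4.2 (failure of the critical estimate).** Let `n ≥ 2` and let `δ > 0`
satisfy the radial lower-bound property of Lemma 4.1.  Let `g ≥ 0` be smooth, radially
symmetric, supported in `{|x| ≤ 1}`, `g(x) = ψ(|x|)` with `ψ ∈ C₀^∞(ℝ)` even, such that
`Ψ(ρ) = ∫_ρ^1 λ^{(n-1)/2}ψ(λ)dλ` does not vanish identically on `(1/(1+δ), 1)`.
If `(1/q, 1/p) ∈ (0,1/2] × [0,1/2)` with `1/q = (n-1)(1/2 - 1/p)`, and `u` solves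
`□u = 0` with data `(0,g)`, then `‖u‖_{L^q((0,T);L^p)} → ∞` as `T → ∞`.
Here `qi = 1/q` and `pi = 1/p`. -/
theorem critical_strichartz_fails (n : ℕ) (hn : 2 ≤ n) (δ : ℝ) (hδ : 0 < δ)
    (hlower : ∀ (R : ℝ), 0 < R →
      ∀ (g : EuclideanSpace ℝ (Fin n) → ℝ) (ψ : ℝ → ℝ),
        ContDiff ℝ (⊤ : ℕ∞) g → (∀ x, 0 ≤ g x) →
        Function.support g ⊆ closedBall 0 R →
        (∀ x, g x = ψ ‖x‖) → (∀ r : ℝ, ψ (-r) = ψ r) →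
        ContDiff ℝ (⊤ : ℕ∞) ψ → HasCompactSupport ψ →
        ∀ (t : ℝ) (x : EuclideanSpace ℝ (Fin n)), 0 < t →
          R / (1 + δ) ≤ ‖x‖ - t → ‖x‖ - t ≤ R →
          (1 / (4 * ‖x‖ ^ (((n : ℝ) - 1) / 2))) *
              ∫ lam in (‖x‖ - t)..(min R (‖x‖ + t)), lam ^ (((n : ℝ) - 1) / 2) * ψ lam
            ≤ (waveSol n g t x).re)
    (g : EuclideanSpace ℝ (Fin n) → ℝ) (ψ : ℝ → ℝ)
    (hg_smooth : ContDiff ℝ (⊤ : ℕ∞) g) (hg_nonneg : ∀ x, 0 ≤ g x)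
    (hg_supp : Function.support g ⊆ closedBall 0 1)
    (hgψ : ∀ x, g x = ψ ‖x‖) (hψ_even : ∀ r : ℝ, ψ (-r) = ψ r)
    (hψ_smooth : ContDiff ℝ (⊤ : ℕ∞) ψ) (hψ_supp : HasCompactSupport ψ)
    (hΨ : ¬ ∀ ρ ∈ Ioo (1 / (1 + δ)) 1,
      (∫ lam in ρ..1, lam ^ (((n : ℝ) - 1) / 2) * ψ lam) = 0)
    (qi pi : ℝ) (hqi0 : 0 < qi) (hqi1 : qi ≤ 1 / 2)
    (hpi0 : 0 ≤ pi) (hpi1 : pi < 1 / 2)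
    (hrel : qi = ((n : ℝ) - 1) * (1 / 2 - pi)) :
    Tendsto (fun T : ℝ => mixedNormOn n qi pi T (waveSol n g)) atTop (𝓝 ⊤) := by
  classical
  haveI : Nontrivial (EuclideanSpace ℝ (Fin n)) :=
    Module.nontrivial_of_finrank_pos (R := ℝ)
      (by rw [finrank_euclideanSpace_fin]; omega)
  have hn2 : (2:ℝ) ≤ (n:ℝ) := by exact_mod_cast hn
  set e : ℝ := ((n:ℝ) - 1) / 2 with he
  have he_pos : 0 < e := by rw [he]; linarith
  -- ψ is nonnegative on nonnegative reals
  have hψnn : ∀ r : ℝ, 0 ≤ r → 0 ≤ ψ r := by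
    intro r hr
    have hx : ‖EuclideanSpace.single (⟨0, by omega⟩ : Fin n) r‖ = r := by
      rw [EuclideanSpace.norm_single, Real.norm_eq_abs, abs_of_nonneg hr]
    have h := hg_nonneg (EuclideanSpace.single (⟨0, by omega⟩ : Fin n) r)
    rwa [hgψ, hx] at h
  -- choose ρ₀ with Ψ(ρ₀) ≠ 0
  push_neg at hΨ
  obtain ⟨ρ₀, hρ₀mem, hΨρ₀⟩ := hΨ
  obtain ⟨hρ₀l, hρ₀r⟩ := hρ₀mem
  have ha_pos : 0 < 1 / (1 + δ) := by positivity
  set ρ₁ : ℝ := (1 / (1 + δ) + ρ₀) / 2 with hρ₁def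
  have hρ₁l : 1 / (1 + δ) < ρ₁ := by rw [hρ₁def]; linarith
  have hρ₁r : ρ₁ < ρ₀ := by rw [hρ₁def]; linarith
  have hρ₁pos : 0 < ρ₁ := lt_trans ha_pos hρ₁l
  -- the integrand
  have hfc : ContinuousOn (fun lam : ℝ => lam ^ e * ψ lam) (Ici ρ₁) := by
    intro lam hlam
    have hlam0 : lam ≠ 0 := by
      have : ρ₁ ≤ lam := hlam
      exact ne_of_gt (lt_of_lt_of_le hρ₁pos this)
    exact ((Real.continuousAt_rpow_const lam e (Or.inl hlam0)).mul
      hψ_smooth.continuous.continuousAt).continuousWithinAt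
  have hfi : ∀ u v : ℝ, ρ₁ ≤ u → ρ₁ ≤ v →
      IntervalIntegrable (fun lam : ℝ => lam ^ e * ψ lam) volume u v := by
    intro u v hu hv
    refine (hfc.mono ?_).intervalIntegrable
    intro x hx
    rw [Set.uIcc] at hx
    exact le_trans (le_min hu hv) hx.1
  set c : ℝ := ∫ lam in ρ₀..(1:ℝ), lam ^ e * ψ lam with hcdef
  have hcnn : 0 ≤ c := by
    refine intervalIntegral.integral_nonneg hρ₀r.le fun u hu => ?_
    have hu0 : 0 ≤ u := le_trans (le_trans hρ₁pos.le hρ₁r.le) hu.1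
    exact mul_nonneg (Real.rpow_nonneg hu0 e) (hψnn u hu0)
  have hc : 0 < c := lt_of_le_of_ne hcnn (Ne.symm hΨρ₀)
  have hΨge : ∀ ρ : ℝ, ρ₁ ≤ ρ → ρ ≤ ρ₀ →
      c ≤ ∫ lam in ρ..(1:ℝ), lam ^ e * ψ lam := by
    intro ρ h1 h2
    have hadd := intervalIntegral.integral_add_adjacent_intervals
      (hfi ρ ρ₀ h1 hρ₁r.le) (hfi ρ₀ 1 hρ₁r.le (by linarith))
    have hnn : 0 ≤ ∫ lam in ρ..ρ₀, lam ^ e * ψ lam := by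
      refine intervalIntegral.integral_nonneg h2 fun u hu => ?_
      have hu0 : 0 ≤ u := le_trans (le_trans hρ₁pos.le h1) hu.1
      exact mul_nonneg (Real.rpow_nonneg hu0 e) (hψnn u hu0)
    rw [← hadd]
    linarith
  -- volumes
  set Vb : ℝ≥0∞ := volume (ball (0 : EuclideanSpace ℝ (Fin n)) 1) with hVbdef
  have hVb0 : 0 < Vb := measure_ball_pos _ _ one_pos
  have hVbt : Vb ≠ ⊤ := measure_ball_lt_top.ne
  set Vr : ℝ := Vb.toReal with hVrdef
  have hVr0 : 0 < Vr := ENNReal.toReal_pos hVb0.ne' hVbt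
  have hVbeq : Vb = ENNReal.ofReal Vr := (ENNReal.ofReal_toReal hVbt).symm
  set D : ℝ := ρ₀ - ρ₁ with hDdef
  have hD0 : 0 < D := by rw [hDdef]; linarith
  set A : ℝ → Set (EuclideanSpace ℝ (Fin n)) := fun t =>
    closedBall (0 : EuclideanSpace ℝ (Fin n)) (t + ρ₀) \ ball 0 (t + ρ₁) with hAdef
  have hAmem : ∀ t : ℝ, ∀ x : EuclideanSpace ℝ (Fin n),
      x ∈ A t ↔ t + ρ₁ ≤ ‖x‖ ∧ ‖x‖ ≤ t + ρ₀ := by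
    intro t x
    simp [hAdef, mem_closedBall_zero_iff, mem_ball_zero_iff, not_lt, and_comm]
  have hAmeas : ∀ t : ℝ, MeasurableSet (A t) := fun t =>
    measurableSet_closedBall.diff measurableSet_ball
  have hpowineq : ∀ t : ℝ, 1 < t →
      D * t ^ (n - 1) + (t + ρ₁) ^ n ≤ (t + ρ₀) ^ n := by
    intro t ht
    rw [hDdef]
    obtain ⟨k, rfl⟩ : ∃ k, n = k + 1 := ⟨n - 1, by omega⟩
    have h0t : (0:ℝ) ≤ t := by linarith
    have h1 : t ^ k ≤ (t + ρ₁) ^ k := pow_le_pow_left₀ h0t (by linarith) k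
    have h2 : (t + ρ₁) ^ k ≤ (t + ρ₀) ^ k := pow_le_pow_left₀ (by linarith) (by linarith) k
    have P1 : (t + ρ₀) * (t + ρ₁) ^ k ≤ (t + ρ₀) * (t + ρ₀) ^ k :=
      mul_le_mul_of_nonneg_left h2 (by linarith)
    have P2 : (ρ₀ - ρ₁) * t ^ k ≤ (ρ₀ - ρ₁) * (t + ρ₁) ^ k :=
      mul_le_mul_of_nonneg_left h1 (by linarith)
    have e1 : (t + ρ₀) ^ (k+1) = (t + ρ₀) * (t + ρ₀) ^ k := by ring
    have e2 : (t + ρ₁) ^ (k+1) = (t + ρ₁) * (t + ρ₁) ^ k := by ring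
    simp only [Nat.add_sub_cancel]
    nlinarith [pow_nonneg h0t k]
  have hAvol : ∀ t : ℝ, 1 < t →
      ENNReal.ofReal (D * t ^ (n-1)) * Vb ≤ volume (A t) := by
    intro t ht
    have h0 : (0:ℝ) ≤ t + ρ₁ := by linarith
    have h0' : (0:ℝ) ≤ t + ρ₀ := by linarith
    have hsub : ball (0 : EuclideanSpace ℝ (Fin n)) (t + ρ₁) ⊆ closedBall 0 (t + ρ₀) :=
      (ball_subset_ball (by linarith)).trans ball_subset_closedBall
    have hvol : volume (A t)
        = ENNReal.ofReal ((t + ρ₀) ^ n) * Vb - ENNReal.ofReal ((t + ρ₁) ^ n) * Vb := by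
      rw [hAdef]
      rw [measure_diff hsub measurableSet_ball.nullMeasurableSet measure_ball_lt_top.ne,
        Measure.addHaar_closedBall _ _ h0', Measure.addHaar_ball _ _ h0,
        finrank_euclideanSpace_fin]
    rw [hvol]
    refine ENNReal.le_sub_of_add_le_right
      (ENNReal.mul_ne_top ENNReal.ofReal_ne_top hVbt) ?_
    rw [← add_mul, ← ENNReal.ofReal_add (by positivity) (by positivity)]
    exact mul_le_mul_left (ENNReal.ofReal_le_ofReal (hpowineq t ht)) _
  -- pointwise lower bound
  have hlow := hlower 1 one_pos g ψ hg_smooth hg_nonneg hg_supp hgψ hψ_even hψ_smooth hψ_supp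
  have hpt : ∀ t : ℝ, 1 < t → ∀ x : EuclideanSpace ℝ (Fin n), x ∈ A t →
      c / (4 * (2 * t) ^ e) ≤ ‖waveSol n g t x‖ := by
    intro t ht x hx
    obtain ⟨hx1, hx2⟩ := (hAmem t x).1 hx
    have hxpos : 0 < ‖x‖ := by linarith
    have hb := hlow t x (by linarith) (by linarith) (by linarith)
    have hmin : min (1:ℝ) (‖x‖ + t) = 1 := min_eq_left (by linarith)
    rw [hmin] at hb
    have hI : c ≤ ∫ lam in (‖x‖ - t)..(1:ℝ), lam ^ e * ψ lam :=
      hΨge (‖x‖ - t) (by linarith) (by linarith)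
    have hxle : ‖x‖ ^ e ≤ (2 * t) ^ e :=
      Real.rpow_le_rpow (norm_nonneg x) (by linarith) he_pos.le
    have hx_e : 0 < ‖x‖ ^ e := Real.rpow_pos_of_pos hxpos e
    have hstep : c / (4 * (2*t) ^ e) ≤ (1 / (4 * ‖x‖ ^ e)) *
        ∫ lam in (‖x‖ - t)..(1:ℝ), lam ^ e * ψ lam := by
      rw [div_mul_eq_mul_div, one_mul]
      exact div_le_div₀ (le_trans hc.le hI) hI (by positivity) (by linarith)
    have hre := le_trans hstep hb
    calc c / (4 * (2*t) ^ e) ≤ (waveSol n g t x).re := hre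
      _ ≤ |(waveSol n g t x).re| := le_abs_self _
      _ ≤ ‖waveSol n g t x‖ := by
          exact Complex.abs_re_le_norm _
  -- real exponent bookkeeping
  have hC0pos : (0:ℝ) < c / (4 * 2 ^ e) * (D * Vr) ^ pi := by
    have h2e : (0:ℝ) < (2:ℝ) ^ e := Real.rpow_pos_of_pos (by norm_num) e
    have hDV : (0:ℝ) < D * Vr := mul_pos hD0 hVr0
    have := Real.rpow_pos_of_pos hDV pi
    positivity
  have hC0 : ∀ t : ℝ, 1 < t →
      (c / (4 * 2 ^ e) * (D * Vr) ^ pi) * t ^ (-qi)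
        = c / (4 * (2*t) ^ e) * (D * t ^ (n-1) * Vr) ^ pi := by
    intro t ht
    have ht0 : (0:ℝ) < t := by linarith
    have h2t : (2*t) ^ e = 2 ^ e * t ^ e := Real.mul_rpow (by norm_num) ht0.le
    have htn : (t : ℝ) ^ (n-1 : ℕ) = t ^ ((n:ℝ) - 1) := by
      rw [← Real.rpow_natCast t (n-1)]
      congr 1
      have h1n : 1 ≤ n := by omega
      push_cast [h1n]
      ring
    have hmulr : (D * t ^ (n-1:ℕ) * Vr) ^ pi = (D * Vr) ^ pi * t ^ (((n:ℝ)-1) * pi) := by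
      rw [htn, show D * t ^ ((n:ℝ)-1) * Vr = (D * Vr) * t ^ ((n:ℝ)-1) by ring,
        Real.mul_rpow (by positivity) (Real.rpow_nonneg ht0.le _), ← Real.rpow_mul ht0.le]
    rw [hmulr, h2t]
    have hte : (0:ℝ) < t ^ e := Real.rpow_pos_of_pos ht0 e
    have h2e : (0:ℝ) < (2:ℝ) ^ e := Real.rpow_pos_of_pos (by norm_num) e
    have hexp : t ^ (-qi) = t ^ (((n:ℝ)-1) * pi) * (t ^ e)⁻¹ := by
      rw [← Real.rpow_neg ht0.le, ← Real.rpow_add ht0]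
      congr 1
      rw [hrel, he]
      ring
    rw [hexp]
    field_simp
  -- the main per-time lower bound on the spatial norm
  have hlp : ∀ t : ℝ, 1 < t →
      ENNReal.ofReal ((c / (4 * 2 ^ e) * (D * Vr) ^ pi) * t ^ (-qi))
        ≤ lpNormInv n pi (waveSol n g t) := by
    intro t ht
    have ht0 : (0:ℝ) < t := by linarith
    have h2t0 : (0:ℝ) < (2*t) ^ e := Real.rpow_pos_of_pos (by linarith) e
    have hmt : (0:ℝ) < c / (4 * (2*t) ^ e) := by positivity
    rw [hC0 t ht]
    have hApos : volume (A t) ≠ 0 := by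
      refine ne_of_gt (lt_of_lt_of_le ?_ (hAvol t ht))
      exact ENNReal.mul_pos (ENNReal.ofReal_pos.2 (by positivity)).ne' hVb0.ne'
    rcases eq_or_lt_of_le hpi0 with hpi | hpi
    · -- p = ∞
      have hpi' : pi = 0 := hpi.symm
      subst hpi'
      rw [Real.rpow_zero, mul_one]
      simp only [lpNormInv, if_pos rfl]
      have hres : volume.restrict (A t) ≠ 0 := by
        rwa [Ne, Measure.restrict_eq_zero]
      haveI : (ae (volume.restrict (A t))).NeBot := ae_neBot.2 hres
      have h0 : ∀ᵐ x ∂(volume : Measure (EuclideanSpace ℝ (Fin n))),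
          (‖waveSol n g t x‖₊ : ℝ≥0∞)
            ≤ essSup (fun x => (‖waveSol n g t x‖₊ : ℝ≥0∞)) volume :=
        ENNReal.ae_le_essSup _
      have h1 : ∀ᵐ x ∂volume.restrict (A t),
          (‖waveSol n g t x‖₊ : ℝ≥0∞)
            ≤ essSup (fun x => (‖waveSol n g t x‖₊ : ℝ≥0∞)) volume :=
        ae_restrict_of_ae h0
      have h2 : ∀ᵐ x ∂volume.restrict (A t), x ∈ A t := ae_restrict_mem (hAmeas t)
      obtain ⟨x, hx1, hx2⟩ := (h1.and h2).exists
      refine le_trans ?_ hx1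
      rw [← ENNReal.ofReal_coe_nnreal, coe_nnnorm]
      exact ENNReal.ofReal_le_ofReal (hpt t ht x hx2)
    · -- p < ∞
      have hpine : pi ≠ 0 := hpi.ne'
      simp only [lpNormInv, if_neg hpine]
      have hkey : ENNReal.ofReal (c / (4 * (2*t) ^ e)) ^ (1/pi) *
            (ENNReal.ofReal (D * t ^ (n-1)) * Vb)
          ≤ ∫⁻ x, (‖waveSol n g t x‖₊ : ℝ≥0∞) ^ (1/pi) := by
        calc ENNReal.ofReal (c / (4 * (2*t) ^ e)) ^ (1/pi) *
              (ENNReal.ofReal (D * t ^ (n-1)) * Vb)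
            ≤ ENNReal.ofReal (c / (4 * (2*t) ^ e)) ^ (1/pi) * volume (A t) :=
              mul_le_mul_right (hAvol t ht) _
          _ = ∫⁻ _ in A t, ENNReal.ofReal (c / (4 * (2*t) ^ e)) ^ (1/pi) ∂volume :=
              (setLIntegral_const _ _).symm
          _ ≤ ∫⁻ x in A t, (‖waveSol n g t x‖₊ : ℝ≥0∞) ^ (1/pi) ∂volume := by
              refine lintegral_mono_ae ((ae_restrict_mem (hAmeas t)).mono fun x hx => ?_)
              refine ENNReal.rpow_le_rpow ?_ (by positivity)
              rw [← ENNReal.ofReal_coe_nnreal, coe_nnnorm]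
              exact ENNReal.ofReal_le_ofReal (hpt t ht x hx)
          _ ≤ ∫⁻ x, (‖waveSol n g t x‖₊ : ℝ≥0∞) ^ (1/pi) := setLIntegral_le_lintegral _ _
      have hmono := ENNReal.rpow_le_rpow hkey hpi0
      refine le_trans (le_of_eq ?_) hmono
      rw [ENNReal.mul_rpow_of_nonneg _ _ hpi0, ← ENNReal.rpow_mul,
        one_div, inv_mul_cancel₀ hpine, ENNReal.rpow_one, hVbeq,
        ← ENNReal.ofReal_mul (by positivity), ENNReal.ofReal_rpow_of_pos (by positivity),
        ← ENNReal.ofReal_mul hmt.le]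
  -- per-time bound after raising to power 1/qi
  have htime : ∀ t : ℝ, 1 < t →
      ENNReal.ofReal ((c / (4 * 2 ^ e) * (D * Vr) ^ pi) ^ (1/qi) * t⁻¹)
        ≤ (lpNormInv n pi (waveSol n g t)) ^ (1/qi) := by
    intro t ht
    have ht0 : (0:ℝ) < t := by linarith
    have hstep := ENNReal.rpow_le_rpow (hlp t ht) (by positivity : (0:ℝ) ≤ 1/qi)
    refine le_trans (le_of_eq ?_) hstep
    have htq : (0:ℝ) < t ^ (-qi) := Real.rpow_pos_of_pos ht0 _
    rw [ENNReal.ofReal_rpow_of_pos (by positivity)]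
    congr 1
    rw [Real.mul_rpow hC0pos.le htq.le, ← Real.rpow_mul ht0.le]
    congr 1
    rw [show -qi * (1/qi) = -1 by field_simp, Real.rpow_neg_one]
  set C1 : ℝ := (c / (4 * 2 ^ e) * (D * Vr) ^ pi) ^ (1/qi) with hC1def
  have hC1pos : 0 < C1 := Real.rpow_pos_of_pos hC0pos _
  -- the main estimate for the mixed norm
  have hmain : ∀ T : ℝ, 1 < T →
      ENNReal.ofReal (C1 * Real.log T) ^ qi ≤ mixedNormOn n qi pi T (waveSol n g) := by
    intro T hT
    have h1 : ∫⁻ t in Ioo (1:ℝ) T, ENNReal.ofReal (C1 * t⁻¹)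
        ≤ ∫⁻ t in Ioo (0:ℝ) T, (lpNormInv n pi (waveSol n g t)) ^ (1/qi) := by
      calc ∫⁻ t in Ioo (1:ℝ) T, ENNReal.ofReal (C1 * t⁻¹)
          ≤ ∫⁻ t in Ioo (1:ℝ) T, (lpNormInv n pi (waveSol n g t)) ^ (1/qi) :=
            lintegral_mono_ae ((ae_restrict_mem measurableSet_Ioo).mono
              fun t htm => htime t htm.1)
        _ ≤ _ := lintegral_mono' (Measure.restrict_mono
              (Ioo_subset_Ioo (by norm_num) le_rfl) le_rfl) le_rfl
    have h2 : ∫⁻ t in Ioo (1:ℝ) T, ENNReal.ofReal (C1 * t⁻¹)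
        = ENNReal.ofReal (C1 * Real.log T) := by
      have hcont : ContinuousOn (fun t : ℝ => C1 * t⁻¹) (Icc 1 T) := by
        refine continuousOn_const.mul (ContinuousOn.inv₀ continuousOn_id fun t htm => ?_)
        exact ne_of_gt (lt_of_lt_of_le one_pos htm.1)
      have hint : IntegrableOn (fun t : ℝ => C1 * t⁻¹) (Ioo 1 T) :=
        (hcont.integrableOn_Icc).mono_set Ioo_subset_Icc_self
      have hnn : 0 ≤ᵐ[volume.restrict (Ioo (1:ℝ) T)] fun t : ℝ => C1 * t⁻¹ :=
        (ae_restrict_mem measurableSet_Ioo).mono fun t htm => by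
          have : (0:ℝ) < t := lt_trans one_pos htm.1
          positivity
      rw [← MeasureTheory.ofReal_integral_eq_lintegral_ofReal hint hnn]
      congr 1
      rw [← MeasureTheory.integral_Ioc_eq_integral_Ioo, ← intervalIntegral.integral_of_le hT.le,
        intervalIntegral.integral_const_mul, integral_inv
          (by rw [Set.uIcc_of_le hT.le]; rintro ⟨h0, _⟩; linarith), div_one]
    rw [mixedNormOn, ← h2]
    exact ENNReal.rpow_le_rpow h1 hqi0.le
  -- conclusion
  refine ENNReal.tendsto_nhds_top fun k => ?_
  have hlog : Tendsto (fun T : ℝ => C1 * Real.log T) atTop atTop :=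
    (tendsto_const_mul_atTop_of_pos hC1pos).2 Real.tendsto_log_atTop
  filter_upwards [eventually_gt_atTop (1:ℝ),
    hlog.eventually_ge_atTop (((k:ℝ) + 1) ^ (1/qi))] with T hT1 hT2
  refine lt_of_lt_of_le ?_ (hmain T hT1)
  have hr0 : (0:ℝ) < ((k:ℝ) + 1) ^ (1/qi) := Real.rpow_pos_of_pos (by positivity) _
  have hstep : ENNReal.ofReal (((k:ℝ) + 1) ^ (1/qi)) ^ qi
      ≤ ENNReal.ofReal (C1 * Real.log T) ^ qi :=
    ENNReal.rpow_le_rpow (ENNReal.ofReal_le_ofReal hT2) hqi0.le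
  refine lt_of_lt_of_le ?_ hstep
  rw [ENNReal.ofReal_rpow_of_pos hr0, ← Real.rpow_mul (by positivity)]
  rw [show 1/qi * qi = 1 by field_simp, Real.rpow_one]
  rw [ENNReal.ofReal_add (by positivity) zero_le_one, ENNReal.ofReal_natCast,
    ENNReal.ofReal_one]
  exact ENNReal.lt_add_right (ENNReal.natCast_ne_top k) one_ne_zero
end
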